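/- arXiv:1006.2620 — 6 statements merged into one kernel-verified Lean document; each statement's English description precedes it below -/
import Mathlib

section
/- Let R ≥ 2 and 1 ≤ c ≤ R − 1 be integers, let p_1, …, p_R be strictly positive reals with p_1 + ⋯ + p_R = 1, and let n ≥ 1 be an integer. Let n_{c+1}, …, n_R ≥ 1 be integers with Σ_{j=c+1}^R n_j = n (the observed vector has zeros in cells 1, …, c). Suppose p_i ≤ p_j / n for every i ∈ {1, …, c} and every j ∈ {c+1, …, R}. Then for every m ≤ c and all nonnegative integers n'_1, …, n'_m and n'_{c+1}, …, n'_R with n'_j ≤ n_j for all j ∈ {c+1, …, R} and Σ_{i=1}^m n'_i + Σ_{j=c+1}^R n'_j = n, the multinomial probabilities satisfy: n!/(Π_{j=c+1}^R n_j!) · Π_{j=c+1}^R p_j^{n_j} ≥ n!/(Π_{i=1}^m n'_i! · Π_{j=c+1}^R n'_j!) · Π_{i=1}^m p_i^{n'_i} · Π_{j=c+1}^R p_j^{n'_j}. -/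
/-!
Write `kⱼ = nⱼ - n'ⱼ` for the number of observations moved out of the nonempty cell `j`, so that
`∑ⱼ kⱼ = ∑ᵢ n'ᵢ`. Every empty-cell probability is at most every `pⱼ / n`, hence
`∏ᵢ pᵢ ^ n'ᵢ ≤ ∏ⱼ (pⱼ / n) ^ kⱼ`. Cell by cell, `nⱼ! ≤ n'ⱼ! · n ^ kⱼ` because `nⱼ ≤ n`, which absorbs
the factors `n⁻¹`; dropping the factorials `n'ᵢ! ≥ 1` of the empty cells can only increase the
right-hand side.
-/

open Finset
open scoped Nat

theorem Nat.factorial_add_le_factorial_mul_pow {a k N : ℕ} (h : a + k ≤ N) :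
    (a + k)! ≤ a ! * N ^ k :=
  calc (a + k)! = a ! * (a + 1).ascFactorial k := (Nat.factorial_mul_ascFactorial a k).symm
    _ ≤ a ! * (a + k) ^ k := Nat.mul_le_mul_left _ (Nat.ascFactorial_le_pow_add a k)
    _ ≤ a ! * N ^ k := Nat.mul_le_mul_left _ (Nat.pow_le_pow_left h k)

theorem pow_div_factorial_mul_div_pow_sub_le {x : ℝ} (hx : 0 ≤ x) {a b N : ℕ} (hab : a ≤ b)
    (hbN : b ≤ N) : x ^ a / a ! * (x / N) ^ (b - a) ≤ x ^ b / b ! := by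
  obtain ⟨k, rfl⟩ := Nat.exists_eq_add_of_le hab
  have hNk : 0 < (N : ℝ) ^ k := by
    rcases Nat.eq_zero_or_pos k with rfl | hk
    · simp
    · exact pow_pos (by exact_mod_cast (show 0 < N by omega)) k
  rw [Nat.add_sub_cancel_left, div_pow, div_mul_div_comm, ← pow_add]
  refine div_le_div_of_nonneg_left (by positivity) (by positivity) ?_
  exact_mod_cast Nat.factorial_add_le_factorial_mul_pow hbN

theorem prod_pow_div_factorial_mul_div_pow_sub_le {ι : Type*} {s : Finset ι} {x : ι → ℝ}
    {a b : ι → ℕ} {N : ℕ} (hx : ∀ j ∈ s, 0 ≤ x j) (hab : ∀ j ∈ s, a j ≤ b j)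
    (hbN : ∀ j ∈ s, b j ≤ N) :
    ∏ j ∈ s, (x j ^ a j / (a j)! * (x j / N) ^ (b j - a j)) ≤ ∏ j ∈ s, x j ^ b j / (b j)! :=
  prod_le_prod
    (fun j hj => mul_nonneg (div_nonneg (pow_nonneg (hx j hj) _) (by positivity))
      (pow_nonneg (div_nonneg (hx j hj) N.cast_nonneg) _))
    fun j hj => pow_div_factorial_mul_div_pow_sub_le (hx j hj) (hab j hj) (hbN j hj)

section Exchange

variable {ι : Type*} {s t : Finset ι} {a b : ι → ℝ} {e k : ι → ℕ} {x : ℝ}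

theorem prod_pow_le_pow_sum (ha : ∀ i ∈ s, 0 ≤ a i) (hax : ∀ i ∈ s, a i ≤ x) :
    ∏ i ∈ s, a i ^ e i ≤ x ^ ∑ i ∈ s, e i := by
  rw [← prod_pow_eq_pow_sum]
  exact prod_le_prod (fun i hi => pow_nonneg (ha i hi) _)
    fun i hi => pow_le_pow_left₀ (ha i hi) (hax i hi) _

theorem pow_sum_le_prod_pow (hx : 0 ≤ x) (hxb : ∀ j ∈ t, x ≤ b j) :
    x ^ ∑ j ∈ t, k j ≤ ∏ j ∈ t, b j ^ k j := by
  rw [← prod_pow_eq_pow_sum]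
  exact prod_le_prod (fun _ _ => pow_nonneg hx _) fun j hj => pow_le_pow_left₀ hx (hxb j hj) _

theorem prod_pow_le_prod_pow_of_le_of_sum_eq (ha : ∀ i ∈ s, 0 ≤ a i) (hb : ∀ j ∈ t, 0 ≤ b j)
    (hab : ∀ i ∈ s, ∀ j ∈ t, a i ≤ b j) (hek : ∑ i ∈ s, e i = ∑ j ∈ t, k j) :
    ∏ i ∈ s, a i ^ e i ≤ ∏ j ∈ t, b j ^ k j := by
  rcases t.eq_empty_or_nonempty with rfl | ht
  · rw [sum_empty, sum_eq_zero_iff] at hek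
    rw [prod_empty, prod_eq_one fun i hi => by rw [hek i hi, pow_zero]]
  · set μ := t.inf' ht b
    calc ∏ i ∈ s, a i ^ e i ≤ μ ^ ∑ i ∈ s, e i :=
          prod_pow_le_pow_sum ha fun i hi => le_inf' ht b fun j hj => hab i hi j hj
      _ ≤ ∏ j ∈ t, b j ^ k j :=
          hek ▸ pow_sum_le_prod_pow (le_inf' ht b hb) fun j hj => inf'_le b hj

end Exchange

theorem likelihood_inequality_general
    (R c : ℕ) (hcR : c ≤ R - 1)
    (p : ℕ → ℝ) (hp : ∀ r ∈ Finset.Icc 1 R, 0 < p r)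
    (n : ℕ)
    (nj : ℕ → ℕ)
    (hnsum : ∑ j ∈ Finset.Icc (c + 1) R, nj j = n)
    (hcond : ∀ i ∈ Finset.Icc 1 c, ∀ j ∈ Finset.Icc (c + 1) R, p i ≤ p j / n)
    (m : ℕ) (hm : m ≤ c) (n' : ℕ → ℕ)
    (hle : ∀ j ∈ Finset.Icc (c + 1) R, n' j ≤ nj j)
    (hsum' : ∑ i ∈ Finset.Icc 1 m, n' i + ∑ j ∈ Finset.Icc (c + 1) R, n' j = n) :
    (n.factorial : ℝ) / (∏ j ∈ Finset.Icc (c + 1) R, ((nj j).factorial : ℝ)) *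
        ∏ j ∈ Finset.Icc (c + 1) R, p j ^ nj j ≥
      (n.factorial : ℝ) /
          ((∏ i ∈ Finset.Icc 1 m, ((n' i).factorial : ℝ)) *
            ∏ j ∈ Finset.Icc (c + 1) R, ((n' j).factorial : ℝ)) *
        ((∏ i ∈ Finset.Icc 1 m, p i ^ n' i) *
          ∏ j ∈ Finset.Icc (c + 1) R, p j ^ n' j) := by
  set S := Icc (c + 1) R
  have hp0 : ∀ r ∈ Icc 1 R, 0 ≤ p r := fun r hr => (hp r hr).le
  have hpS : ∀ j ∈ S, 0 ≤ p j := fun j hj => hp0 j (Icc_subset_Icc (by omega) le_rfl hj)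
  have hpT : ∀ i ∈ Icc 1 m, 0 ≤ p i := fun i hi => hp0 i (Icc_subset_Icc le_rfl (by omega) hi)
  have hnj_le : ∀ j ∈ S, nj j ≤ n := fun j hj => hnsum ▸ single_le_sum (fun _ _ => Nat.zero_le _) hj
  have hmoved : ∑ i ∈ Icc 1 m, n' i = ∑ j ∈ S, (nj j - n' j) := by
    rw [sum_tsub_distrib _ hle]; omega
  have hA : (1 : ℝ) ≤ ∏ i ∈ Icc 1 m, ((n' i)! : ℝ) :=
    one_le_prod fun i _ => by exact_mod_cast (n' i).factorial_pos
  rw [ge_iff_le]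
  calc _ ≤ (n ! : ℝ) / (∏ j ∈ S, ((n' j)! : ℝ)) *
          ((∏ i ∈ Icc 1 m, p i ^ n' i) * ∏ j ∈ S, p j ^ n' j) := by
        gcongr
        · exact mul_nonneg (prod_nonneg fun i hi => pow_nonneg (hpT i hi) _)
            (prod_nonneg fun j hj => pow_nonneg (hpS j hj) _)
        · exact le_mul_of_one_le_left (by positivity) hA
    _ ≤ (n ! : ℝ) / (∏ j ∈ S, ((n' j)! : ℝ)) *
          ((∏ j ∈ S, (p j / n) ^ (nj j - n' j)) * ∏ j ∈ S, p j ^ n' j) := by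
        gcongr
        · exact prod_nonneg fun j hj => pow_nonneg (hpS j hj) _
        · exact prod_pow_le_prod_pow_of_le_of_sum_eq hpT
            (fun j hj => div_nonneg (hpS j hj) n.cast_nonneg)
            (fun i hi => hcond i (Icc_subset_Icc_right hm hi)) hmoved
    _ = n ! * ∏ j ∈ S, (p j ^ n' j / (n' j)! * (p j / n) ^ (nj j - n' j)) := by
        rw [prod_mul_distrib, prod_div_distrib]; ring
    _ ≤ n ! * ∏ j ∈ S, (p j ^ nj j / (nj j)!) :=
        mul_le_mul_of_nonneg_left (prod_pow_div_factorial_mul_div_pow_sub_le hpS hle hnj_le)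
          (by positivity)
    _ = _ := by rw [prod_div_distrib]; ring

/-- Proposition 1 of the paper (likelihood inequality): for a multinomial
`M(n; p₁, …, p_R)` with zeros observed in cells `1, …, c`, if
`pᵢ ≤ pⱼ / n` for every empty cell `i` and nonempty cell `j`, then the
observed vector is at least as likely as any vector obtained by moving
observations from the nonempty cells into the first `m ≤ c` empty cells. -/
theorem likelihood_inequality
    (R c : ℕ) (hR : 2 ≤ R) (hc1 : 1 ≤ c) (hcR : c ≤ R - 1)
    (p : ℕ → ℝ) (hp : ∀ r ∈ Finset.Icc 1 R, 0 < p r)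
    (hpsum : ∑ r ∈ Finset.Icc 1 R, p r = 1)
    (n : ℕ) (hn : 1 ≤ n)
    (nj : ℕ → ℕ) (hnj : ∀ j ∈ Finset.Icc (c + 1) R, 1 ≤ nj j)
    (hnsum : ∑ j ∈ Finset.Icc (c + 1) R, nj j = n)
    (hcond : ∀ i ∈ Finset.Icc 1 c, ∀ j ∈ Finset.Icc (c + 1) R, p i ≤ p j / n)
    (m : ℕ) (hm : m ≤ c) (n' : ℕ → ℕ)
    (hle : ∀ j ∈ Finset.Icc (c + 1) R, n' j ≤ nj j)
    (hsum' : ∑ i ∈ Finset.Icc 1 m, n' i + ∑ j ∈ Finset.Icc (c + 1) R, n' j = n) :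
    (n.factorial : ℝ) / (∏ j ∈ Finset.Icc (c + 1) R, ((nj j).factorial : ℝ)) *
        ∏ j ∈ Finset.Icc (c + 1) R, p j ^ nj j ≥
      (n.factorial : ℝ) /
          ((∏ i ∈ Finset.Icc 1 m, ((n' i).factorial : ℝ)) *
            ∏ j ∈ Finset.Icc (c + 1) R, ((n' j).factorial : ℝ)) *
        ((∏ i ∈ Finset.Icc 1 m, p i ^ n' i) *
          ∏ j ∈ Finset.Icc (c + 1) R, p j ^ n' j) :=
  likelihood_inequality_general R c hcR p hp n nj hnsum hcond m hm n' hle hsum'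
end

section
/- Let n ≥ 2, R ≥ 2 and 1 ≤ c ≤ R − 1 be integers, and let n_{c+1}, …, n_R ≥ 1 be integers with Σ_{j=c+1}^R n_j = n which are not all equal. Then b_min < 1, where b_min = max(0, ln(n̄̄/(R−1))/ln n, ln(n̲̲)/ln n, ln(n̄ − n̲)/ln n). -/
/-!
Every `n_j` lies in `[1, n]` and `n̲ (R - c) ≤ n`, with `1 ≤ R - c ≤ R - 1`. Hence each of the
three arguments of `ln` in `b_min` has absolute value strictly less than `n`, and since
`ln x = ln |x|` each quotient `ln(·) / ln n` is below `1`.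
-/

open Finset Real

lemma Real.log_div_log_lt_one_of_abs_lt {x y : ℝ} (hy : 1 < y) (hx : |x| < y) :
    log x / log y < 1 := by
  rw [div_lt_one (log_pos hy), ← log_abs]
  rcases (abs_nonneg x).eq_or_lt with h | h
  · rw [← h, log_zero]
    exact log_pos hy
  · exact log_lt_log h hx

section Bounds

variable {n m r a b : ℝ}

lemma abs_mul_sub_div_lt (ha : 1 ≤ a) (han : a ≤ n) (hm : 1 ≤ m) (hmr : m ≤ r) :
    |(a * m - n) / r| < n := by
  have hr : 0 < r := by linarith
  rw [abs_div, abs_of_pos hr, div_lt_iff₀ hr, abs_lt]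
  constructor <;> nlinarith

lemma abs_sub_mul_lt (ha : 1 ≤ a) (hm : 1 ≤ m) (hamn : a * m ≤ n) : |n - a * m| < n := by
  rw [abs_lt]
  constructor <;> nlinarith

lemma abs_sub_lt_of_one_le_of_le (ha : 1 ≤ a) (han : a ≤ n) (hb : 1 ≤ b) (hbn : b ≤ n) :
    |a - b| < n := by
  rw [abs_lt]
  constructor <;> linarith

end Bounds

theorem bmin_lt_one_general
    (n R c : ℕ) (hn : 2 ≤ n) (hc1 : 1 ≤ c) (hcR : c ≤ R - 1)
    (nj : ℕ → ℕ) (hnj : ∀ j ∈ Finset.Icc (c + 1) R, 1 ≤ nj j)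
    (hnsum : ∑ j ∈ Finset.Icc (c + 1) R, nj j = n)
    (nmin nmax : ℕ)
    (hminle : ∀ j ∈ Finset.Icc (c + 1) R, nmin ≤ nj j)
    (hminmem : ∃ j ∈ Finset.Icc (c + 1) R, nj j = nmin)
    (hmaxmem : ∃ j ∈ Finset.Icc (c + 1) R, nj j = nmax) :
    max 0 (max
        (Real.log (((nmax : ℝ) * ((R : ℝ) - (c : ℝ)) - (n : ℝ)) / ((R : ℝ) - 1)) /
          Real.log n)
        (max
          (Real.log ((n : ℝ) - (nmin : ℝ) * ((R : ℝ) - (c : ℝ))) / Real.log n)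
          (Real.log ((nmax : ℝ) - (nmin : ℝ)) / Real.log n))) < 1 := by
  obtain ⟨jmin, hjmin, rfl⟩ := hminmem
  obtain ⟨jmax, hjmax, rfl⟩ := hmaxmem
  have hn' : (1 : ℝ) < n := by exact_mod_cast hn
  have hsum : ∑ j ∈ Icc (c + 1) R, (nj j : ℝ) = n := by exact_mod_cast hnsum
  have hone_le : ∀ j ∈ Icc (c + 1) R, (1 : ℝ) ≤ nj j := fun j hj => by exact_mod_cast hnj j hj
  have hle_n : ∀ j ∈ Icc (c + 1) R, (nj j : ℝ) ≤ n := fun j hj =>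
    hsum ▸ single_le_sum (fun i hi => zero_le_one.trans (hone_le i hi)) hj
  have hcard : ((Icc (c + 1) R).card : ℝ) = R - c := by
    rw [Nat.card_Icc, Nat.add_sub_add_right, Nat.cast_sub (by omega)]
  have hmin_mul : (nj jmin : ℝ) * (R - c) ≤ n := by
    have := card_nsmul_le_sum _ _ _ fun j hj => (Nat.cast_le.2 (hminle j hj) : (nj jmin : ℝ) ≤ nj j)
    rwa [nsmul_eq_mul, hcard, hsum, mul_comm] at this
  have hRc : (1 : ℝ) ≤ R - c := by
    have : (c : ℝ) + 1 ≤ R := by exact_mod_cast (by omega : c + 1 ≤ R)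
    linarith
  have hRc' : (R : ℝ) - c ≤ R - 1 := by
    have : (1 : ℝ) ≤ c := by exact_mod_cast hc1
    linarith
  simp only [max_lt_iff]
  exact ⟨one_pos,
    log_div_log_lt_one_of_abs_lt hn'
      (abs_mul_sub_div_lt (hone_le _ hjmax) (hle_n _ hjmax) hRc hRc'),
    log_div_log_lt_one_of_abs_lt hn' (abs_sub_mul_lt (hone_le _ hjmin) hRc hmin_mul),
    log_div_log_lt_one_of_abs_lt hn'
      (abs_sub_lt_of_one_le_of_le (hone_le _ hjmax) (hle_n _ hjmax) (hone_le _ hjmin)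
        (hle_n _ hjmin))⟩

/-- First assertion of Property 1 of the paper: if the nonzero cell
frequencies `n_{c+1}, …, n_R` (summing to `n`) are not all equal, then
`b_min < 1`, where
`b_min = max (0, ln(n̄̄/(R−1))/ln n, ln(n̲̲)/ln n, ln(n̄ − n̲)/ln n)`,
with `n̲` the minimum and `n̄` the maximum of the `n_j`,
`n̲̲ = n − n̲(R−c)` and `n̄̄ = n̄(R−c) − n`. -/
theorem bmin_lt_one
    (n R c : ℕ) (hn : 2 ≤ n) (hR : 2 ≤ R) (hc1 : 1 ≤ c) (hcR : c ≤ R - 1)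
    (nj : ℕ → ℕ) (hnj : ∀ j ∈ Finset.Icc (c + 1) R, 1 ≤ nj j)
    (hnsum : ∑ j ∈ Finset.Icc (c + 1) R, nj j = n)
    (hne : ∃ j ∈ Finset.Icc (c + 1) R, ∃ j' ∈ Finset.Icc (c + 1) R, nj j ≠ nj j')
    (nmin nmax : ℕ)
    (hminle : ∀ j ∈ Finset.Icc (c + 1) R, nmin ≤ nj j)
    (hminmem : ∃ j ∈ Finset.Icc (c + 1) R, nj j = nmin)
    (hmaxle : ∀ j ∈ Finset.Icc (c + 1) R, nj j ≤ nmax)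
    (hmaxmem : ∃ j ∈ Finset.Icc (c + 1) R, nj j = nmax) :
    max 0 (max
        (Real.log (((nmax : ℝ) * ((R : ℝ) - (c : ℝ)) - (n : ℝ)) / ((R : ℝ) - 1)) /
          Real.log n)
        (max
          (Real.log ((n : ℝ) - (nmin : ℝ) * ((R : ℝ) - (c : ℝ))) / Real.log n)
          (Real.log ((nmax : ℝ) - (nmin : ℝ)) / Real.log n))) < 1 :=
  bmin_lt_one_general n R c hn hc1 hcR nj hnj hnsum nmin nmax hminle hminmem hmaxmem
end

section
/- Fix integers R and c with R − c ≥ 2 and c ≥ 1, and let u, v : ℕ → ℕ be sequences with 1 ≤ u(n) ≤ v(n) ≤ n for all n ≥ 1, such that u(n)/n → 0 and v(n)/n → 1 as n → ∞. Then b_min(n) → 1 as n → ∞, where b_min(n) = max(0, ln((v(n)(R−c) − n)/(R−1))/ln n, ln(n − u(n)(R−c))/ln n, ln(v(n) − u(n))/ln n). -/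
open Filter

private lemma log_abs_le {x M : ℝ} (hM : 1 ≤ M) (hx : |x| ≤ M) :
    Real.log x ≤ Real.log M := by
  rw [← Real.log_abs x]
  rcases eq_or_lt_of_le (abs_nonneg x) with h | h
  · rw [← h, Real.log_zero]
    exact Real.log_nonneg hM
  · exact Real.log_le_log h hx

private lemma aux_log (a : ℕ → ℝ) (L : ℝ) (hL : 0 < L)
    (h : Tendsto (fun n : ℕ => a n / n) atTop (nhds L)) :
    Tendsto (fun n : ℕ => Real.log (a n) / Real.log n) atTop (nhds 1) := by
  have hlog : Tendsto (fun n : ℕ => Real.log n) atTop atTop :=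
    Real.tendsto_log_atTop.comp tendsto_natCast_atTop_atTop
  have hinv : Tendsto (fun n : ℕ => (Real.log n)⁻¹) atTop (nhds 0) :=
    hlog.inv_tendsto_atTop
  have hnum : Tendsto (fun n : ℕ => Real.log (a n / n)) atTop (nhds (Real.log L)) :=
    (Real.continuousAt_log hL.ne').tendsto.comp h
  have hmain : Tendsto (fun n : ℕ => Real.log (a n / n) * (Real.log n)⁻¹ + 1)
      atTop (nhds 1) := by
    have := (hnum.mul hinv).add (tendsto_const_nhds (x := (1 : ℝ)))
    simpa using this
  refine hmain.congr' ?_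
  have h1 : ∀ᶠ n : ℕ in atTop, L / 2 < a n / n :=
    h.eventually (eventually_gt_nhds (by linarith))
  filter_upwards [h1, eventually_ge_atTop 2] with n han hn2
  have hn1 : (1 : ℝ) < n := by exact_mod_cast Nat.lt_of_lt_of_le Nat.one_lt_two hn2
  have hn0 : (0 : ℝ) < n := by linarith
  have hlogn : 0 < Real.log n := Real.log_pos hn1
  have ha : 0 < a n / n := by linarith
  have hlogeq : Real.log (a n) = Real.log (a n / n) + Real.log n := by
    rw [← Real.log_mul ha.ne' hn0.ne', div_mul_cancel₀ _ hn0.ne']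
  rw [hlogeq, add_div, div_self hlogn.ne']; ring

/-- Second assertion of Property 1 of the paper: if the minimum cell
frequency `u n = n̲` satisfies `n̲ = o(n)` and the maximum cell frequency
`v n = n̄` satisfies `n̄ ∼ n` as `n → ∞`, then `b_min(n) → 1`. -/
theorem bmin_tendsto_one
    (R c : ℕ) (hc : 1 ≤ c) (hRc : 2 ≤ R - c)
    (u v : ℕ → ℕ)
    (huv : ∀ n : ℕ, 1 ≤ n → 1 ≤ u n ∧ u n ≤ v n ∧ v n ≤ n)
    (hu : Tendsto (fun n : ℕ => (u n : ℝ) / (n : ℝ)) atTop (nhds 0))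
    (hv : Tendsto (fun n : ℕ => (v n : ℝ) / (n : ℝ)) atTop (nhds 1)) :
    Tendsto
      (fun n : ℕ =>
        max 0 (max
          (Real.log (((v n : ℝ) * ((R : ℝ) - (c : ℝ)) - (n : ℝ)) / ((R : ℝ) - 1)) /
            Real.log n)
          (max
            (Real.log ((n : ℝ) - (u n : ℝ) * ((R : ℝ) - (c : ℝ))) / Real.log n)
            (Real.log ((v n : ℝ) - (u n : ℝ)) / Real.log n))))
      atTop (nhds 1) := by
  have hR3 : 3 ≤ R := by omega
  have hcR : c + 2 ≤ R := by omega
  have hRr : (3 : ℝ) ≤ (R : ℝ) := by exact_mod_cast hR3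
  have hcRr : (c : ℝ) + 2 ≤ (R : ℝ) := by exact_mod_cast hcR
  have hcr : (1 : ℝ) ≤ (c : ℝ) := by exact_mod_cast hc
  -- lower bound sequence
  have hlow : Tendsto (fun n : ℕ => Real.log ((v n : ℝ) - (u n : ℝ)) / Real.log n)
      atTop (nhds 1) := by
    apply aux_log _ 1 one_pos
    have := hv.sub hu
    simpa [sub_div] using this
  -- upper bound sequence
  have hupInner : Tendsto (fun n : ℕ => Real.log ((n : ℝ) * ((R : ℝ) + 1)) / Real.log n)
      atTop (nhds 1) := by
    apply aux_log _ ((R : ℝ) + 1) (by linarith)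
    refine tendsto_const_nhds.congr' ?_
    filter_upwards [eventually_ge_atTop 1] with n hn
    have hn0 : (0 : ℝ) < n := by exact_mod_cast hn
    field_simp
  have hup : Tendsto (fun n : ℕ =>
      max 0 (Real.log ((n : ℝ) * ((R : ℝ) + 1)) / Real.log n)) atTop (nhds 1) := by
    have := (tendsto_const_nhds (x := (0 : ℝ))).max hupInner
    simpa using this
  refine tendsto_of_tendsto_of_tendsto_of_le_of_le' hlow hup ?_ ?_
  · -- lower bound
    filter_upwards with n
    exact le_max_of_le_right (le_max_of_le_right (le_max_right _ _))
  · -- upper bound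
    filter_upwards [eventually_ge_atTop 2] with n hn2
    obtain ⟨h1, h2, h3⟩ := huv n (by omega)
    have h1r : (1 : ℝ) ≤ (u n : ℝ) := by exact_mod_cast h1
    have h2r : (u n : ℝ) ≤ (v n : ℝ) := by exact_mod_cast h2
    have h3r : (v n : ℝ) ≤ (n : ℝ) := by exact_mod_cast h3
    have hn2r : (2 : ℝ) ≤ (n : ℝ) := by exact_mod_cast hn2
    have hlogn : 0 < Real.log n := Real.log_pos (by linarith)
    have hM1 : (1 : ℝ) ≤ (n : ℝ) * ((R : ℝ) + 1) := by nlinarith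
    apply max_le_max le_rfl
    have key : ∀ x : ℝ, |x| ≤ (n : ℝ) * ((R : ℝ) + 1) →
        Real.log x / Real.log n ≤ Real.log ((n : ℝ) * ((R : ℝ) + 1)) / Real.log n := by
      intro x hx
      exact div_le_div_of_nonneg_right (log_abs_le hM1 hx) hlogn.le |>.trans le_rfl
    refine max_le (key _ ?_) (max_le (key _ ?_) (key _ ?_))
    · rw [abs_div, abs_of_pos (by linarith : (0 : ℝ) < (R : ℝ) - 1)]
      rw [div_le_iff₀ (by linarith : (0 : ℝ) < (R : ℝ) - 1)]
      rw [abs_le]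
      constructor <;> nlinarith
    · rw [abs_le]
      constructor <;> nlinarith
    · rw [abs_le]
      constructor <;> nlinarith
end

section
/- Let n ≥ 2, R ≥ 2 and 1 ≤ c ≤ R − 1 be integers, and let n_{c+1}, …, n_R ≥ 1 be integers with Σ_{j=c+1}^R n_j = n which are not all equal. Let b be a real number with b_min < b < 1 and let a be a real number with a_min(b) < a < a_max(b). Then the vector p̂^{ab} satisfies: (i) 0 < p̂^{ab}_r < 1 for every r ∈ {1, …, R}; (ii) Σ_{r=1}^R p̂^{ab}_r = 1; and (iii) p̂^{ab}_i ≤ p̂^{ab}_j / n for every i ∈ {1, …, c} and every j ∈ {c+1, …, R}. -/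
open Finset

/-! With `N = n^b` and `m = R - c`, every tail entry is
`p̂_j = (n_j m - (a c N + n - N)) / (N m)`, an increasing affine function of `n_j`.
Hence positivity only has to be checked at `n̲`, the bound `p̂_j < 1` at `n̄`, and
`p̂_i = a ≤ p̂_j / n` at `n̲`; each of these is one of the three nontrivial
inequalities in `a_min(b) < a < a_max(b)`. The entries sum to one because the
correction `(a c + n/N - 1)/m` spreads the excess `a c + n/N - 1` evenly over the
`m` tail entries. -/

section TailEntries

variable {N x a c m kmin kmax k : ℝ}

lemma tail_entry_eq (hN : N ≠ 0) (hm : m ≠ 0) :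
    k / N - (a * c + x / N - 1) / m = (k * m - (a * c * N + x - N)) / (N * m) := by
  field_simp

lemma tail_entry_pos (hN : 0 < N) (hm : 0 < m) (hc : 0 < c) (hk : kmin ≤ k)
    (ha : a < (N - (x - kmin * m)) / (c * N)) :
    0 < k / N - (a * c + x / N - 1) / m := by
  rw [lt_div_iff₀ (by positivity)] at ha
  rw [tail_entry_eq hN.ne' hm.ne']
  apply div_pos _ (mul_pos hN hm)
  nlinarith

lemma tail_entry_lt_one (hN : 0 < N) (hm : 0 < m) (hc : 0 < c) (hx : 0 ≤ x) (hk : k ≤ kmax)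
    (ha : ((kmax - N) * m + N) / (c * N) < a) :
    k / N - (a * c + x / N - 1) / m < 1 := by
  rw [div_lt_iff₀ (by positivity)] at ha
  rw [tail_entry_eq hN.ne' hm.ne', div_lt_one (mul_pos hN hm)]
  nlinarith

lemma le_tail_entry_div (hN : 0 < N) (hm : 0 < m) (hc : 0 < c) (hx : 0 < x) (hk : kmin ≤ k)
    (ha : a < (N - (x - kmin * m)) / (N * (x * m + c))) :
    a ≤ (k / N - (a * c + x / N - 1) / m) / x := by
  rw [lt_div_iff₀ (by positivity)] at ha
  rw [tail_entry_eq hN.ne' hm.ne', div_div, le_div_iff₀ (by positivity)]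
  nlinarith

lemma add_sum_tail_entries_eq_one {ι : Type*} {s : Finset ι} {f : ι → ℝ} (hN : N ≠ 0) (hm : (#s : ℝ) = m)
    (hm0 : m ≠ 0) (hx : ∑ j ∈ s, f j = x) :
    c * a + ∑ j ∈ s, (f j / N - (a * c + x / N - 1) / m) = 1 := by
  rw [sum_sub_distrib, ← sum_div, hx, sum_const, nsmul_eq_mul, hm]
  field_simp
  ring

lemma sum_Icc_one_eq_add {M : Type*} [AddCommMonoid M] (f : ℕ → M) {c R : ℕ} (h : c ≤ R) :
    ∑ r ∈ Icc 1 R, f r = ∑ r ∈ Icc 1 c, f r + ∑ r ∈ Icc (c + 1) R, f r := by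
  rw [show Icc 1 R = Icc (0 + 1) R from rfl, show Icc 1 c = Icc (0 + 1) c from rfl]
  simp only [Icc_add_one_left_eq_Ioc]
  exact (sum_Ioc_consecutive f (Nat.zero_le c) h).symm

lemma sum_estimator_eq_one {c R : ℕ} {f : ℕ → ℝ} (hcR : c < R) (hN : N ≠ 0)
    (hx : ∑ j ∈ Icc (c + 1) R, f j = x) :
    ∑ r ∈ Icc 1 R, (if r ≤ c then a else f r / N - (a * c + x / N - 1) / (R - c)) = 1 := by
  have hcard : ((#(Icc (c + 1) R) : ℕ) : ℝ) = R - c := by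
    rw [Nat.card_Icc, Nat.add_sub_add_right, Nat.cast_sub hcR.le]
  rw [sum_Icc_one_eq_add _ hcR.le, sum_ite_of_true fun r hr => (mem_Icc.mp hr).2,
    sum_ite_of_false fun r hr => by simp only [mem_Icc] at hr; omega, sum_const, Nat.card_Icc,
    Nat.add_sub_cancel, nsmul_eq_mul]
  exact add_sum_tail_entries_eq_one hN hcard (sub_ne_zero.mpr (by exact_mod_cast hcR.ne')) hx

end TailEntries

theorem corrected_estimator_is_admissible_general
    (n R c : ℕ) (hn : 2 ≤ n) (hc1 : 1 ≤ c) (hcR : c ≤ R - 1)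
    (nj : ℕ → ℕ)
    (hnsum : ∑ j ∈ Finset.Icc (c + 1) R, nj j = n)
    (nmin nmax : ℕ)
    (hminle : ∀ j ∈ Finset.Icc (c + 1) R, nmin ≤ nj j)
    (hmaxle : ∀ j ∈ Finset.Icc (c + 1) R, nj j ≤ nmax)
    (a b : ℝ)
    -- `a_min(b) < a < a_max(b)`
    (ha₁ : max 0
        ((((nmax : ℝ) - (n : ℝ) ^ b) * ((R : ℝ) - (c : ℝ)) + (n : ℝ) ^ b) /
          ((c : ℝ) * (n : ℝ) ^ b)) < a)
    (ha₂ : a < min 1 (min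
        (((n : ℝ) ^ b - ((n : ℝ) - (nmin : ℝ) * ((R : ℝ) - (c : ℝ)))) /
          ((c : ℝ) * (n : ℝ) ^ b))
        (((n : ℝ) ^ b - ((n : ℝ) - (nmin : ℝ) * ((R : ℝ) - (c : ℝ)))) /
          ((n : ℝ) ^ b * ((n : ℝ) * ((R : ℝ) - (c : ℝ)) + (c : ℝ))))))
    -- the corrected estimator
    (phat : ℕ → ℝ)
    (hphat : ∀ r : ℕ, phat r =
      if r ≤ c then a
      else (nj r : ℝ) / (n : ℝ) ^ b -
        (a * (c : ℝ) + (n : ℝ) ^ (1 - b) - 1) / ((R : ℝ) - (c : ℝ))) :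
    (∀ r ∈ Finset.Icc 1 R, 0 < phat r ∧ phat r < 1) ∧
      (∑ r ∈ Finset.Icc 1 R, phat r = 1) ∧
      (∀ i ∈ Finset.Icc 1 c, ∀ j ∈ Finset.Icc (c + 1) R,
        phat i ≤ phat j / (n : ℝ)) := by
  have hn0 : (0 : ℝ) < n := by positivity
  have hN : 0 < (n : ℝ) ^ b := Real.rpow_pos_of_pos hn0 b
  have hc : (0 : ℝ) < c := by exact_mod_cast hc1
  have hcR' : c < R := by omega
  have hm : (0 : ℝ) < R - c := sub_pos.mpr (by exact_mod_cast hcR')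
  have hphat_eq : ∀ r, phat r = if r ≤ c then a
      else (nj r : ℝ) / (n : ℝ) ^ b - (a * c + n / (n : ℝ) ^ b - 1) / (R - c) := by
    intro r
    rw [hphat, Real.rpow_sub hn0, Real.rpow_one]
  obtain ⟨ha0, ha_max⟩ := max_lt_iff.mp ha₁
  obtain ⟨ha1, ha_pos, ha_div⟩ : a < 1 ∧ _ ∧ _ := by
    simpa only [lt_min_iff] using ha₂
  refine ⟨fun r hr => ?_, ?_, fun i hi j hj => ?_⟩
  · rw [hphat_eq]
    split_ifs with hrc
    · exact ⟨ha0, ha1⟩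
    · have hr' : r ∈ Icc (c + 1) R := mem_Icc.mpr ⟨by omega, (mem_Icc.mp hr).2⟩
      exact ⟨tail_entry_pos hN hm hc (by exact_mod_cast hminle r hr') ha_pos,
        tail_entry_lt_one hN hm hc hn0.le (by exact_mod_cast hmaxle r hr') ha_max⟩
  · rw [sum_congr rfl fun r _ => hphat_eq r]
    exact sum_estimator_eq_one hcR' hN.ne' (by exact_mod_cast hnsum)
  · rw [hphat_eq i, if_pos (mem_Icc.mp hi).2, hphat_eq j, if_neg (by simp only [mem_Icc] at hj; omega)]
    exact le_tail_entry_div hN hm hc hn0 (by exact_mod_cast hminle j hj) ha_div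

/-- Conditions (2.13) and (2.14) of the paper: if `b_min < b < 1` and
`a_min(b) < a < a_max(b)`, then the corrected estimator `p̂^{ab}` is a
probability vector with entries strictly between `0` and `1` satisfying the
sufficient condition `p̂_i ≤ p̂_j / n` of Proposition 1. -/
theorem corrected_estimator_is_admissible
    (n R c : ℕ) (hn : 2 ≤ n) (hR : 2 ≤ R) (hc1 : 1 ≤ c) (hcR : c ≤ R - 1)
    (nj : ℕ → ℕ) (hnj : ∀ j ∈ Finset.Icc (c + 1) R, 1 ≤ nj j)
    (hnsum : ∑ j ∈ Finset.Icc (c + 1) R, nj j = n)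
    (hne : ∃ j ∈ Finset.Icc (c + 1) R, ∃ j' ∈ Finset.Icc (c + 1) R, nj j ≠ nj j')
    (nmin nmax : ℕ)
    (hminle : ∀ j ∈ Finset.Icc (c + 1) R, nmin ≤ nj j)
    (hminmem : ∃ j ∈ Finset.Icc (c + 1) R, nj j = nmin)
    (hmaxle : ∀ j ∈ Finset.Icc (c + 1) R, nj j ≤ nmax)
    (hmaxmem : ∃ j ∈ Finset.Icc (c + 1) R, nj j = nmax)
    (a b : ℝ)
    -- `b_min < b < 1`
    (hb₁ : max 0 (max
        (Real.log (((nmax : ℝ) * ((R : ℝ) - (c : ℝ)) - (n : ℝ)) / ((R : ℝ) - 1)) /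
          Real.log n)
        (max
          (Real.log ((n : ℝ) - (nmin : ℝ) * ((R : ℝ) - (c : ℝ))) / Real.log n)
          (Real.log ((nmax : ℝ) - (nmin : ℝ)) / Real.log n))) < b)
    (hb₂ : b < 1)
    -- `a_min(b) < a < a_max(b)`
    (ha₁ : max 0
        ((((nmax : ℝ) - (n : ℝ) ^ b) * ((R : ℝ) - (c : ℝ)) + (n : ℝ) ^ b) /
          ((c : ℝ) * (n : ℝ) ^ b)) < a)
    (ha₂ : a < min 1 (min
        (((n : ℝ) ^ b - ((n : ℝ) - (nmin : ℝ) * ((R : ℝ) - (c : ℝ)))) /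
          ((c : ℝ) * (n : ℝ) ^ b))
        (((n : ℝ) ^ b - ((n : ℝ) - (nmin : ℝ) * ((R : ℝ) - (c : ℝ)))) /
          ((n : ℝ) ^ b * ((n : ℝ) * ((R : ℝ) - (c : ℝ)) + (c : ℝ))))))
    -- the corrected estimator
    (phat : ℕ → ℝ)
    (hphat : ∀ r : ℕ, phat r =
      if r ≤ c then a
      else (nj r : ℝ) / (n : ℝ) ^ b -
        (a * (c : ℝ) + (n : ℝ) ^ (1 - b) - 1) / ((R : ℝ) - (c : ℝ))) :
    (∀ r ∈ Finset.Icc 1 R, 0 < phat r ∧ phat r < 1) ∧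
      (∑ r ∈ Finset.Icc 1 R, phat r = 1) ∧
      (∀ i ∈ Finset.Icc 1 c, ∀ j ∈ Finset.Icc (c + 1) R,
        phat i ≤ phat j / (n : ℝ)) :=
  corrected_estimator_is_admissible_general n R c hn hc1 hcR nj hnsum nmin nmax hminle hmaxle a b
    ha₁ ha₂ phat hphat
end

section
/- Let n ≥ 1, R ≥ 2 and 1 ≤ c ≤ R − 1 be integers, let n_{c+1}, …, n_R ≥ 1 be integers with Σ_{j=c+1}^R n_j = n, let p⁰_1, …, p⁰_R be strictly positive reals with Σ_{r=1}^R p⁰_r = 1, and let a, b be real numbers. Then Q_{p⁰}(p̂^{ab}) = n^{2(1−b)} · Q_{p⁰}(p*) − f(a,b), where f(a,b) = n·(1 − n^{2(1−b)} + (2 n^{1−b}(ac + n^{1−b} − 1)/(R−c)) · Σ_{j=c+1}^R n_j/(n p⁰_j) − a² Σ_{i=1}^c 1/p⁰_i − ((ac + n^{1−b} − 1)/(R−c))² Σ_{j=c+1}^R 1/p⁰_j). -/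
/-!
Since `p̂^{ab}` and `p⁰` both sum to one, each Pearson statistic reduces to
`n (∑ q_r² / p⁰_r - 1)`. On the last `R - c` cells `p̂^{ab}` is the affine image
`n^{1-b} p* - K` of the maximum likelihood estimator, `K = (ac + n^{1-b} - 1)/(R - c)`,
so expanding the square expresses `∑ (p̂^{ab}_r)² / p⁰_r` through `∑ (p*_r)² / p⁰_r`.
-/

open Finset

namespace Finset

variable {ι 𝕜 : Type*} [Field 𝕜] (s : Finset ι)

theorem sum_sq_sub_div_eq (p q : ι → 𝕜) (hp : ∀ i ∈ s, p i ≠ 0) :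
    ∑ i ∈ s, (q i - p i) ^ 2 / p i =
      ∑ i ∈ s, q i ^ 2 / p i - 2 * ∑ i ∈ s, q i + ∑ i ∈ s, p i := by
  rw [mul_sum, ← sum_sub_distrib, ← sum_add_distrib]
  refine sum_congr rfl fun i hi => ?_
  field_simp [hp i hi]
  ring

theorem sum_mul_sub_sq_div (x p : ι → 𝕜) (α β : 𝕜) :
    ∑ i ∈ s, (α * x i - β) ^ 2 / p i =
      α ^ 2 * ∑ i ∈ s, x i ^ 2 / p i - 2 * α * β * ∑ i ∈ s, x i / p i +
        β ^ 2 * ∑ i ∈ s, 1 / p i := by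
  simp only [mul_sum, ← sum_sub_distrib, ← sum_add_distrib]
  refine sum_congr rfl fun i _ => ?_
  ring

theorem sum_const_sub_sq_div (p : ι → 𝕜) (a : 𝕜) (hp : ∀ i ∈ s, p i ≠ 0) :
    ∑ i ∈ s, (a - p i) ^ 2 / p i =
      a ^ 2 * ∑ i ∈ s, 1 / p i - 2 * a * #s + ∑ i ∈ s, p i := by
  simp only [sum_sq_sub_div_eq s p _ hp, mul_sum, mul_one_div, sum_const, nsmul_eq_mul]
  ring

theorem sum_mul_sub_sub_sq_div (x p : ι → 𝕜) (α β : 𝕜) (hp : ∀ i ∈ s, p i ≠ 0) :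
    ∑ i ∈ s, (α * x i - β - p i) ^ 2 / p i =
      α ^ 2 * ∑ i ∈ s, x i ^ 2 / p i - 2 * α * β * ∑ i ∈ s, x i / p i +
        β ^ 2 * ∑ i ∈ s, 1 / p i - 2 * (α * ∑ i ∈ s, x i - β * #s) + ∑ i ∈ s, p i := by
  rw [sum_sq_sub_div_eq s p _ hp, sum_mul_sub_sq_div, sum_sub_distrib, ← mul_sum, sum_const,
    nsmul_eq_mul, mul_comm β]

theorem sum_Icc_one_add_sum_Icc_succ {M : Type*} [AddCommMonoid M] (f : ℕ → M) {c R : ℕ}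
    (hcR : c ≤ R) :
    ∑ i ∈ Icc 1 c, f i + ∑ j ∈ Icc (c + 1) R, f j = ∑ r ∈ Icc 1 R, f r := by
  have hIcc_one : ∀ m, Icc 1 m = Ioc 0 m := Icc_add_one_left_eq_Ioc 0
  rw [hIcc_one, hIcc_one, Icc_add_one_left_eq_Ioc, sum_Ioc_consecutive f (Nat.zero_le c) hcR]

end Finset

theorem corrected_pearson_statistic_general
    (n R c : ℕ) (hn : 1 ≤ n)
    (nj : ℕ → ℕ)
    (hnsum : ∑ j ∈ Finset.Icc (c + 1) R, nj j = n)
    (p0 : ℕ → ℝ) (hp0 : ∀ r ∈ Finset.Icc 1 R, 0 < p0 r)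
    (hp0sum : ∑ r ∈ Finset.Icc 1 R, p0 r = 1)
    (a b : ℝ) :
    -- `Q_{p⁰}(p̂^{ab})`
    (n : ℝ) *
        (∑ i ∈ Finset.Icc 1 c, (a - p0 i) ^ 2 / p0 i +
          ∑ j ∈ Finset.Icc (c + 1) R,
            ((nj j : ℝ) / (n : ℝ) ^ b -
                (a * (c : ℝ) + (n : ℝ) ^ (1 - b) - 1) / ((R : ℝ) - (c : ℝ)) -
              p0 j) ^ 2 / p0 j) =
      -- `n^{2(1−b)} · Q_{p⁰}(p*)`
      (n : ℝ) ^ (2 * (1 - b)) *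
          ((n : ℝ) *
            (∑ i ∈ Finset.Icc 1 c, (0 - p0 i) ^ 2 / p0 i +
              ∑ j ∈ Finset.Icc (c + 1) R,
                ((nj j : ℝ) / (n : ℝ) - p0 j) ^ 2 / p0 j)) -
        -- `f(a,b)`
        (n : ℝ) *
          (1 - (n : ℝ) ^ (2 * (1 - b)) +
            2 * (n : ℝ) ^ (1 - b) *
                (a * (c : ℝ) + (n : ℝ) ^ (1 - b) - 1) / ((R : ℝ) - (c : ℝ)) *
              ∑ j ∈ Finset.Icc (c + 1) R, (nj j : ℝ) / ((n : ℝ) * p0 j) -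
            a ^ 2 * ∑ i ∈ Finset.Icc 1 c, 1 / p0 i -
            ((a * (c : ℝ) + (n : ℝ) ^ (1 - b) - 1) / ((R : ℝ) - (c : ℝ))) ^ 2 *
              ∑ j ∈ Finset.Icc (c + 1) R, 1 / p0 j) := by
  have hcR : c < R :=
    nonempty_Icc.mp (nonempty_of_sum_ne_zero (hnsum.trans_ne (by omega)))
  have hn0 : (0 : ℝ) < n := by exact_mod_cast hn
  have hp0I : ∀ i ∈ Icc 1 c, p0 i ≠ 0 := fun i hi =>
    (hp0 i (Icc_subset_Icc_right hcR.le hi)).ne'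
  have hp0J : ∀ j ∈ Icc (c + 1) R, p0 j ≠ 0 := fun j hj =>
    (hp0 j (Icc_subset_Icc_left (Nat.le_add_left 1 c) hj)).ne'
  have ht2 : (n : ℝ) ^ (2 * (1 - b)) = ((n : ℝ) ^ (1 - b)) ^ 2 := by
    rw [mul_comm, Real.rpow_mul hn0.le, Real.rpow_two]
  have hnb : ∀ j, (nj j : ℝ) / (n : ℝ) ^ b = (n : ℝ) ^ (1 - b) * ((nj j : ℝ) / n) := fun j => by
    rw [Real.rpow_sub hn0, Real.rpow_one]
    field_simp
  set t := (n : ℝ) ^ (1 - b)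
  set K := (a * (c : ℝ) + t - 1) / ((R : ℝ) - (c : ℝ))
  -- equivalently, `p̂^{ab}` sums to one
  have hK : K * ((R : ℝ) - c) = a * c + t - 1 :=
    div_mul_cancel₀ _ (sub_ne_zero.mpr (by exact_mod_cast hcR.ne'))
  have hfreq : ∑ j ∈ Icc (c + 1) R, (nj j : ℝ) / n = 1 := by
    rw [← sum_div, div_eq_one_iff_eq hn0.ne']
    exact_mod_cast hnsum
  have hcardI : ((Icc 1 c).card : ℝ) = c := by simp
  have hcardJ : ((Icc (c + 1) R).card : ℝ) = R - c := by
    rw [Nat.card_Icc, Nat.add_sub_add_right, Nat.cast_sub hcR.le]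
  have hp := (sum_Icc_one_add_sum_Icc_succ p0 hcR.le).trans hp0sum
  simp only [hnb]
  rw [sum_const_sub_sq_div _ _ _ hp0I, sum_const_sub_sq_div _ _ _ hp0I,
    sum_mul_sub_sub_sq_div _ _ _ _ _ hp0J, sum_sq_sub_div_eq _ _ _ hp0J, hfreq,
    hcardI, hcardJ, ht2]
  simp only [div_div]
  linear_combination (n : ℝ) * (2 * hK + (1 - t ^ 2) * hp)

/-- Closed-form expression for the corrected Pearson statistic:
`Q_{p⁰}(p̂^{ab}) = n^{2(1−b)} · Q_{p⁰}(p*) − f(a,b)`, where `p*` is the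
maximum likelihood estimator (zeros in the first `c` cells) and `p̂^{ab}` is
the corrected estimator of the paper. -/
theorem corrected_pearson_statistic
    (n R c : ℕ) (hn : 1 ≤ n) (hR : 2 ≤ R) (hc1 : 1 ≤ c) (hcR : c ≤ R - 1)
    (nj : ℕ → ℕ) (hnj : ∀ j ∈ Finset.Icc (c + 1) R, 1 ≤ nj j)
    (hnsum : ∑ j ∈ Finset.Icc (c + 1) R, nj j = n)
    (p0 : ℕ → ℝ) (hp0 : ∀ r ∈ Finset.Icc 1 R, 0 < p0 r)
    (hp0sum : ∑ r ∈ Finset.Icc 1 R, p0 r = 1)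
    (a b : ℝ) :
    -- `Q_{p⁰}(p̂^{ab})`
    (n : ℝ) *
        (∑ i ∈ Finset.Icc 1 c, (a - p0 i) ^ 2 / p0 i +
          ∑ j ∈ Finset.Icc (c + 1) R,
            ((nj j : ℝ) / (n : ℝ) ^ b -
                (a * (c : ℝ) + (n : ℝ) ^ (1 - b) - 1) / ((R : ℝ) - (c : ℝ)) -
              p0 j) ^ 2 / p0 j) =
      -- `n^{2(1−b)} · Q_{p⁰}(p*)`
      (n : ℝ) ^ (2 * (1 - b)) *
          ((n : ℝ) *
            (∑ i ∈ Finset.Icc 1 c, (0 - p0 i) ^ 2 / p0 i +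
              ∑ j ∈ Finset.Icc (c + 1) R,
                ((nj j : ℝ) / (n : ℝ) - p0 j) ^ 2 / p0 j)) -
        -- `f(a,b)`
        (n : ℝ) *
          (1 - (n : ℝ) ^ (2 * (1 - b)) +
            2 * (n : ℝ) ^ (1 - b) *
                (a * (c : ℝ) + (n : ℝ) ^ (1 - b) - 1) / ((R : ℝ) - (c : ℝ)) *
              ∑ j ∈ Finset.Icc (c + 1) R, (nj j : ℝ) / ((n : ℝ) * p0 j) -
            a ^ 2 * ∑ i ∈ Finset.Icc 1 c, 1 / p0 i -
            ((a * (c : ℝ) + (n : ℝ) ^ (1 - b) - 1) / ((R : ℝ) - (c : ℝ))) ^ 2 *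
              ∑ j ∈ Finset.Icc (c + 1) R, 1 / p0 j) :=
  corrected_pearson_statistic_general n R c hn nj hnsum p0 hp0 hp0sum a b
end

section
/- Let n ≥ 1, R ≥ 2 and 1 ≤ c ≤ R − 1 be integers, let n_{c+1}, …, n_R ≥ 1 be integers with Σ_{j=c+1}^R n_j = n, let p⁰_1, …, p⁰_R be strictly positive reals, and let a, b be real numbers with a > 0 and such that p̂^{ab}_j = n_j/n^b − (ac + n^{1−b} − 1)/(R−c) > 0 for every j ∈ {c+1, …, R}. Then G_{p⁰}(p̂^{ab}) = n^{1−b} · G_{p⁰}(p*) − g(a,b), where g(a,b) = 2n·( ((ac + n^{1−b} − 1)/(R−c)) Σ_{j=c+1}^R ln((n_j(R−c) − n^b(ac + n^{1−b} − 1))/(p⁰_j n^b (R−c))) − a Σ_{i=1}^c ln(a/p⁰_i) − n^{1−b} Σ_{j=c+1}^R (n_j/n) ln((n_j(R−c) − n^b(ac + n^{1−b} − 1))/(n_j n^{b−1} (R−c))) ). -/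
/-!
Each corrected cell is a rescaled and shifted maximum likelihood cell,
`p̂_j = n^{1-b} p*_j - K/(R-c)` with `K = ac + n^{1-b} - 1`, and
`log (p̂_j / p⁰_j) = log (p*_j / p⁰_j) + log (p̂_j / p*_j)`. Expanding
`p̂_j log (p̂_j / p⁰_j)` along these two decompositions splits the corrected statistic into
`n^{1-b} G`, a `K/(R-c)`-weighted sum of logarithms and a `n^{1-b}`-weighted correction.
-/

open Finset Real

theorem mul_log_div_eq_of_eq_mul_sub {q m s p B : ℝ} (hq : q = s * m - B) (hq0 : q ≠ 0)
    (hm0 : m ≠ 0) (hp0 : p ≠ 0) :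
    q * log (q / p) = s * (m * log (m / p)) - B * log (q / p) + s * (m * log (q / m)) := by
  have hsplit : log (q / p) = log (m / p) + log (q / m) := by
    rw [log_div hq0 hp0, log_div hm0 hp0, log_div hq0 hm0]
    ring
  rw [hsplit, hq]
  ring

theorem sum_mul_log_div_eq_of_eq_mul_sub {ι : Type*} (J : Finset ι) (q m p : ι → ℝ) (s B : ℝ)
    (hq : ∀ j ∈ J, q j = s * m j - B) (hq0 : ∀ j ∈ J, q j ≠ 0) (hm0 : ∀ j ∈ J, m j ≠ 0)
    (hp0 : ∀ j ∈ J, p j ≠ 0) :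
    ∑ j ∈ J, q j * log (q j / p j) =
      s * ∑ j ∈ J, m j * log (m j / p j) - B * ∑ j ∈ J, log (q j / p j) +
        s * ∑ j ∈ J, m j * log (q j / m j) := by
  simp only [mul_sum, ← sum_sub_distrib, ← sum_add_distrib]
  exact sum_congr rfl fun j hj =>
    mul_log_div_eq_of_eq_mul_sub (hq j hj) (hq0 j hj) (hm0 j hj) (hp0 j hj)

theorem rpow_one_sub_mul_div_self {N : ℝ} (hN : 0 < N) (b x : ℝ) :
    N ^ (1 - b) * (x / N) = x / N ^ b := by
  rw [rpow_sub hN, rpow_one]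
  field_simp

theorem corrected_cell_div {N : ℝ} (hN : 0 < N) (b : ℝ) {d : ℝ} (hd : d ≠ 0) (x K p : ℝ) :
    (x / N ^ b - K / d) / p = (x * d - N ^ b * K) / (p * N ^ b * d) := by
  rw [div_sub_div _ _ (rpow_pos_of_pos hN b).ne' hd, div_div]
  ring

theorem corrected_cell_div_mle {N : ℝ} (hN : 0 < N) (b : ℝ) {d : ℝ} (hd : d ≠ 0) (x K : ℝ) :
    (x / N ^ b - K / d) / (x / N) = (x * d - N ^ b * K) / (x * N ^ (b - 1) * d) := by
  rw [corrected_cell_div hN b hd, rpow_sub hN, rpow_one]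
  field_simp

theorem corrected_kullback_statistic_general
    (n R c : ℕ) (hn : 1 ≤ n) (hR : 2 ≤ R) (hcR : c ≤ R - 1)
    (nj : ℕ → ℕ) (hnj : ∀ j ∈ Finset.Icc (c + 1) R, 1 ≤ nj j)
    (p0 : ℕ → ℝ) (hp0 : ∀ r ∈ Finset.Icc 1 R, 0 < p0 r)
    (a b : ℝ)
    (hpos : ∀ j ∈ Finset.Icc (c + 1) R,
      0 < (nj j : ℝ) / (n : ℝ) ^ b -
        (a * (c : ℝ) + (n : ℝ) ^ (1 - b) - 1) / ((R : ℝ) - (c : ℝ))) :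
    -- `G_{p⁰}(p̂^{ab})`
    2 * (n : ℝ) *
        (∑ i ∈ Finset.Icc 1 c, a * Real.log (a / p0 i) +
          ∑ j ∈ Finset.Icc (c + 1) R,
            ((nj j : ℝ) / (n : ℝ) ^ b -
                (a * (c : ℝ) + (n : ℝ) ^ (1 - b) - 1) / ((R : ℝ) - (c : ℝ))) *
              Real.log
                (((nj j : ℝ) / (n : ℝ) ^ b -
                    (a * (c : ℝ) + (n : ℝ) ^ (1 - b) - 1) / ((R : ℝ) - (c : ℝ))) /
                  p0 j)) =
      -- `n^{1−b} · G_{p⁰}(p*)`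
      (n : ℝ) ^ (1 - b) *
          (2 * (n : ℝ) *
            ∑ j ∈ Finset.Icc (c + 1) R,
              ((nj j : ℝ) / (n : ℝ)) * Real.log ((nj j : ℝ) / ((n : ℝ) * p0 j))) -
        -- `g(a,b)`
        2 * (n : ℝ) *
          ((a * (c : ℝ) + (n : ℝ) ^ (1 - b) - 1) / ((R : ℝ) - (c : ℝ)) *
              ∑ j ∈ Finset.Icc (c + 1) R,
                Real.log
                  (((nj j : ℝ) * ((R : ℝ) - (c : ℝ)) -
                      (n : ℝ) ^ b * (a * (c : ℝ) + (n : ℝ) ^ (1 - b) - 1)) /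
                    (p0 j * (n : ℝ) ^ b * ((R : ℝ) - (c : ℝ)))) -
            a * ∑ i ∈ Finset.Icc 1 c, Real.log (a / p0 i) -
            (n : ℝ) ^ (1 - b) *
              ∑ j ∈ Finset.Icc (c + 1) R,
                ((nj j : ℝ) / (n : ℝ)) *
                  Real.log
                    (((nj j : ℝ) * ((R : ℝ) - (c : ℝ)) -
                        (n : ℝ) ^ b * (a * (c : ℝ) + (n : ℝ) ^ (1 - b) - 1)) /
                      ((nj j : ℝ) * (n : ℝ) ^ (b - 1) * ((R : ℝ) - (c : ℝ))))) := by
  have hN : (0 : ℝ) < n := by exact_mod_cast hn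
  have hd : (R : ℝ) - c ≠ 0 := sub_ne_zero.mpr (by norm_cast; omega)
  set K := a * (c : ℝ) + (n : ℝ) ^ (1 - b) - 1
  have hsplit := sum_mul_log_div_eq_of_eq_mul_sub (Icc (c + 1) R)
    (fun j => (nj j : ℝ) / (n : ℝ) ^ b - K / ((R : ℝ) - c)) (fun j => (nj j : ℝ) / n) p0
    ((n : ℝ) ^ (1 - b)) (K / ((R : ℝ) - c))
    (fun j _ => by rw [rpow_one_sub_mul_div_self hN])
    (fun j hj => (hpos j hj).ne')
    (fun j hj => div_ne_zero (Nat.cast_ne_zero.mpr (Nat.one_le_iff_ne_zero.mp (hnj j hj))) hN.ne')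
    (fun j hj => (hp0 j (Icc_subset_Icc (by omega) le_rfl hj)).ne')
  simp only [corrected_cell_div_mle hN b hd, div_div] at hsplit
  simp only [corrected_cell_div hN b hd] at hsplit ⊢
  rw [hsplit, ← mul_sum]
  ring

/-- Closed-form expression for the corrected Kullback statistic:
`G_{p⁰}(p̂^{ab}) = n^{1−b} · G_{p⁰}(p*) − g(a,b)`, where `p*` is the maximum
likelihood estimator (zeros in the first `c` cells, whose terms contribute `0`
to `G_{p⁰}(p*)`) and `p̂^{ab}` is the corrected estimator of the paper. -/
theorem corrected_kullback_statistic
    (n R c : ℕ) (hn : 1 ≤ n) (hR : 2 ≤ R) (hc1 : 1 ≤ c) (hcR : c ≤ R - 1)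
    (nj : ℕ → ℕ) (hnj : ∀ j ∈ Finset.Icc (c + 1) R, 1 ≤ nj j)
    (hnsum : ∑ j ∈ Finset.Icc (c + 1) R, nj j = n)
    (p0 : ℕ → ℝ) (hp0 : ∀ r ∈ Finset.Icc 1 R, 0 < p0 r)
    (a b : ℝ) (ha : 0 < a)
    (hpos : ∀ j ∈ Finset.Icc (c + 1) R,
      0 < (nj j : ℝ) / (n : ℝ) ^ b -
        (a * (c : ℝ) + (n : ℝ) ^ (1 - b) - 1) / ((R : ℝ) - (c : ℝ))) :
    -- `G_{p⁰}(p̂^{ab})`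
    2 * (n : ℝ) *
        (∑ i ∈ Finset.Icc 1 c, a * Real.log (a / p0 i) +
          ∑ j ∈ Finset.Icc (c + 1) R,
            ((nj j : ℝ) / (n : ℝ) ^ b -
                (a * (c : ℝ) + (n : ℝ) ^ (1 - b) - 1) / ((R : ℝ) - (c : ℝ))) *
              Real.log
                (((nj j : ℝ) / (n : ℝ) ^ b -
                    (a * (c : ℝ) + (n : ℝ) ^ (1 - b) - 1) / ((R : ℝ) - (c : ℝ))) /
                  p0 j)) =
      -- `n^{1−b} · G_{p⁰}(p*)`
      (n : ℝ) ^ (1 - b) *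
          (2 * (n : ℝ) *
            ∑ j ∈ Finset.Icc (c + 1) R,
              ((nj j : ℝ) / (n : ℝ)) * Real.log ((nj j : ℝ) / ((n : ℝ) * p0 j))) -
        -- `g(a,b)`
        2 * (n : ℝ) *
          ((a * (c : ℝ) + (n : ℝ) ^ (1 - b) - 1) / ((R : ℝ) - (c : ℝ)) *
              ∑ j ∈ Finset.Icc (c + 1) R,
                Real.log
                  (((nj j : ℝ) * ((R : ℝ) - (c : ℝ)) -
                      (n : ℝ) ^ b * (a * (c : ℝ) + (n : ℝ) ^ (1 - b) - 1)) /
                    (p0 j * (n : ℝ) ^ b * ((R : ℝ) - (c : ℝ)))) -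
            a * ∑ i ∈ Finset.Icc 1 c, Real.log (a / p0 i) -
            (n : ℝ) ^ (1 - b) *
              ∑ j ∈ Finset.Icc (c + 1) R,
                ((nj j : ℝ) / (n : ℝ)) *
                  Real.log
                    (((nj j : ℝ) * ((R : ℝ) - (c : ℝ)) -
                        (n : ℝ) ^ b * (a * (c : ℝ) + (n : ℝ) ^ (1 - b) - 1)) /
                      ((nj j : ℝ) * (n : ℝ) ^ (b - 1) * ((R : ℝ) - (c : ℝ))))) :=
  corrected_kullback_statistic_general n R c hn hR hcR nj hnj p0 hp0 a b hpos
end
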